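/- arXiv:2410.03628 — 2 statements merged into one kernel-verified Lean document; each statement's English description precedes it below -/
import Mathlib

section
/- Let G₀ = (V₀, E₀) be a connected graph, U ⊆ V₀ a vertex subset, and t > 0 an integer with β_t(G₀, U) > 0. Let L ≥ 1/β_t(G₀, U) and let G₀^(L) be the graph thickened L times (the Cartesian product of G₀ with the path graph on L vertices). Then for every l ∈ {0,...,L−1}, the relative expansion satisfies β_t(G₀^(L), U × {l}) ≥ 1. -/
open Matrix Finset

/-- Hamming weight. -/
def hwt {E : Type*} [Fintype E] (v : E → ZMod 2) : ℕ :=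
  (Finset.univ.filter fun e => v e ≠ 0).card

/-- Weight of the restriction of `v` to `U`. -/
def hwtOn {V : Type*} (v : V → ZMod 2) (U : Finset V) : ℕ :=
  (U.filter fun i => v i ≠ 0).card

/-- The set of constants witnessing the relative-expansion inequality. -/
def expSet {E V : Type*} [Fintype E] [Fintype V] (G : Matrix E V (ZMod 2))
    (U : Finset V) (t : ℕ) : Set ℝ :=
  {c | ∀ v : V → ZMod 2,
    c * min (t : ℝ) (min (hwtOn v U : ℝ) ((U.card : ℝ) - (hwtOn v U : ℝ)))
      ≤ (hwt (G.mulVec v) : ℝ)}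

/-- The relative expansion `β_t(G, U)`. -/
noncomputable def relExp {E V : Type*} [Fintype E] [Fintype V]
    (G : Matrix E V (ZMod 2)) (U : Finset V) (t : ℕ) : ℝ :=
  sSup (expSet G U t)

/-- Incidence matrix: every row has exactly two `1`s. -/
def IsIncidence {E V : Type*} [Fintype E] [Fintype V]
    (G : Matrix E V (ZMod 2)) : Prop :=
  ∀ e, hwt (G e) = 2

/-- The graph determined by an incidence matrix. -/
def incGraph {E V : Type*} (G : Matrix E V (ZMod 2)) : SimpleGraph V :=
  SimpleGraph.fromRel (fun i j => ∃ e, G e i ≠ 0 ∧ G e j ≠ 0)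

/-- The incidence matrix of the graph `G₀` thickened `L` times (Cartesian product with
the path graph on `L` vertices): the block matrix `[[I_L ⊗ G], [H_R ⊗ I_n]]`. -/
def thickened {m n : ℕ} (G : Matrix (Fin m) (Fin n) (ZMod 2)) (L : ℕ) :
    Matrix ((Fin L × Fin m) ⊕ (Fin (L - 1) × Fin n)) (Fin L × Fin n) (ZMod 2) :=
  Matrix.of fun e w =>
    match e with
    | Sum.inl (l, e) => if w.1 = l then G e w.2 else 0
    | Sum.inr (k, i) =>
        if w.2 = i ∧ ((w.1 : ℕ) = (k : ℕ) ∨ (w.1 : ℕ) = (k : ℕ) + 1) then 1 else 0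

/-! ### Auxiliary lemmas -/

lemma mv_inl {m n L : ℕ} (G : Matrix (Fin m) (Fin n) (ZMod 2))
    (v : Fin L × Fin n → ZMod 2) (j : Fin L) (e : Fin m) :
    (thickened G L).mulVec v (Sum.inl (j, e)) = G.mulVec (fun i => v (j, i)) e := by
  simp only [Matrix.mulVec, dotProduct, thickened, Matrix.of_apply, Fintype.sum_prod_type,
    ite_mul, zero_mul]
  rw [Finset.sum_eq_single j]
  · simp
  · intro b _ hb; simp [hb]
  · simp

lemma mv_inr {m n L : ℕ} (G : Matrix (Fin m) (Fin n) (ZMod 2))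
    (v : Fin L × Fin n → ZMod 2) (k : Fin (L-1)) (i : Fin n)
    (h1 : (k : ℕ) < L) (h2 : (k : ℕ) + 1 < L) :
    (thickened G L).mulVec v (Sum.inr (k, i)) = v (⟨k, h1⟩, i) + v (⟨k+1, h2⟩, i) := by
  simp only [Matrix.mulVec, dotProduct, thickened, Matrix.of_apply, Fintype.sum_prod_type]
  have : ∀ j : Fin L, ∑ i' : Fin n,
      (if i' = i ∧ ((j : ℕ) = (k : ℕ) ∨ (j : ℕ) = (k : ℕ) + 1) then (1:ZMod 2) else 0) * v (j, i')
      = (if j = (⟨k, h1⟩ : Fin L) then v (⟨k, h1⟩, i) else 0)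
        + (if j = (⟨k+1, h2⟩ : Fin L) then v (⟨k+1, h2⟩, i) else 0) := by
    intro j
    rw [Finset.sum_eq_single i]
    · by_cases hj1 : j = (⟨k, h1⟩ : Fin L)
      · subst hj1; simp [Fin.ext_iff]
      · by_cases hj2 : j = (⟨k+1, h2⟩ : Fin L)
        · subst hj2; simp [Fin.ext_iff]
        · have : ¬((j : ℕ) = (k : ℕ) ∨ (j : ℕ) = (k : ℕ) + 1) := by
            rintro (h | h)
            · exact hj1 (Fin.ext h)
            · exact hj2 (Fin.ext h)
          simp [this, hj1, hj2]
    · intro b _ hb; simp [hb]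
    · simp
  rw [Finset.sum_congr rfl (fun j _ => this j), Finset.sum_add_distrib]
  simp

lemma hwt_eq_sum {E : Type*} [Fintype E] (v : E → ZMod 2) :
    hwt v = ∑ e, if v e ≠ 0 then 1 else 0 := Finset.card_filter _ _

lemma hwt_sum_split {A B : Type*} [Fintype A] [Fintype B] (v : A ⊕ B → ZMod 2) :
    hwt v = hwt (fun a => v (Sum.inl a)) + hwt (fun b => v (Sum.inr b)) := by
  simp [hwt_eq_sum, Fintype.sum_sum_type]

lemma hwt_prod_split {A B : Type*} [Fintype A] [Fintype B] (v : A × B → ZMod 2) :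
    hwt v = ∑ a, hwt (fun b => v (a, b)) := by
  simp [hwt_eq_sum, Fintype.sum_prod_type]

lemma hwtOn_le_hwt {V : Type*} [Fintype V] (v : V → ZMod 2) (U : Finset V) :
    hwtOn v U ≤ hwt v :=
  Finset.card_le_card (Finset.filter_subset_filter _ (Finset.subset_univ U))

lemma hwtOn_add_ge {V : Type*} [DecidableEq V] (v w : V → ZMod 2) (U : Finset V) :
    (hwtOn v U : ℤ) - hwtOn w U ≤ hwtOn (v + w) U := by
  have : (U.filter fun i => v i ≠ 0) ⊆
      (U.filter fun i => w i ≠ 0) ∪ (U.filter fun i => (v + w) i ≠ 0) := by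
    intro i hi
    simp only [Finset.mem_filter, Finset.mem_union, Pi.add_apply] at *
    rcases hi with ⟨hU, hv⟩
    by_cases hw : w i = 0
    · exact Or.inr ⟨hU, by simpa [hw] using hv⟩
    · exact Or.inl ⟨hU, hw⟩
  have h2 := (Finset.card_le_card this).trans (Finset.card_union_le _ _)
  unfold hwtOn
  omega

lemma hwtOn_image {V W : Type*} [DecidableEq W] (v : W → ZMod 2) (U : Finset V)
    (f : V → W) (hf : Function.Injective f) :
    hwtOn v (U.image f) = hwtOn (fun i => v (f i)) U := by
  unfold hwtOn
  rw [Finset.filter_image, Finset.card_image_of_injective _ hf]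

lemma hwtOn_le_card {V : Type*} (v : V → ZMod 2) (U : Finset V) : hwtOn v U ≤ U.card :=
  Finset.card_filter_le _ _

lemma relExp_spec {E V : Type*} [Fintype E] [Fintype V] (G : Matrix E V (ZMod 2))
    (U : Finset V) (t : ℕ) (v : V → ZMod 2) :
    relExp G U t * min (t : ℝ) (min (hwtOn v U : ℝ) ((U.card : ℝ) - (hwtOn v U : ℝ)))
      ≤ (hwt (G.mulVec v) : ℝ) := by
  set M := min (t : ℝ) (min (hwtOn v U : ℝ) ((U.card : ℝ) - (hwtOn v U : ℝ))) with hM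
  have hM0 : 0 ≤ M := by
    have h1 : (hwtOn v U : ℝ) ≤ (U.card : ℝ) := by exact_mod_cast hwtOn_le_card v U
    simp only [hM, le_min_iff]
    exact ⟨by positivity, by positivity, by linarith⟩
  rcases eq_or_lt_of_le hM0 with h0 | h0
  · rw [← h0, mul_zero]; positivity
  · have hub : relExp G U t ≤ (hwt (G.mulVec v) : ℝ) / M := by
      apply Real.sSup_le
      · intro c hc
        rw [div_eq_inv_mul]
        calc c = (M⁻¹ * M) * c := by field_simp
        _ = M⁻¹ * (c * M) := by ring
        _ ≤ M⁻¹ * (hwt (G.mulVec v) : ℝ) := by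
            apply mul_le_mul_of_nonneg_left _ (by positivity)
            linarith [hc v]
        _ = _ := by ring
      · positivity
    calc relExp G U t * M ≤ ((hwt (G.mulVec v) : ℝ) / M) * M :=
          mul_le_mul_of_nonneg_right hub hM0
    _ = _ := by field_simp

lemma two_le_card_of_relExp_pos {E V : Type*} [Fintype E] [Fintype V]
    (G : Matrix E V (ZMod 2)) (U : Finset V) (t : ℕ) (ht : 0 < t)
    (hpos : 0 < relExp G U t) : 2 ≤ U.card := by
  by_contra h
  push_neg at h
  have hall : expSet G U t = Set.univ := by
    ext c; simp only [Set.mem_univ, iff_true]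
    intro v
    have h1 : hwtOn v U ≤ U.card := hwtOn_le_card v U
    have : min (hwtOn v U : ℝ) ((U.card : ℝ) - (hwtOn v U : ℝ)) = 0 := by
      interval_cases hc : U.card <;>
        · have := hwtOn_le_card v U
          rw [hc] at this
          interval_cases hh : hwtOn v U <;> simp [hc, hh]
    rw [this]
    have : min (t:ℝ) 0 = 0 := min_eq_right (by positivity)
    rw [this, mul_zero]
    positivity
  have : ¬ BddAbove (expSet G U t) := by
    rw [hall]
    intro ⟨b, hb⟩
    exact absurd (hb (Set.mem_univ (b+1))) (by linarith)
  rw [relExp, Real.sSup_of_not_bddAbove this] at hpos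
  exact lt_irrefl _ hpos

lemma tele (f : ℕ → ℝ) (a b : ℕ) (hab : a ≤ b) :
    |f b - f a| ≤ ∑ k ∈ Finset.Ico a b, |f (k+1) - f k| := by
  induction b, hab using Nat.le_induction with
  | base => simp
  | succ b hab ih =>
    rw [Finset.sum_Ico_succ_top (by omega)]
    calc |f (b+1) - f a| = |(f b - f a) + (f (b+1) - f b)| := by ring_nf
    _ ≤ |f b - f a| + |f (b+1) - f b| := abs_add_le _ _
    _ ≤ _ := by linarith

/-- **thickening boosts relative expansion.** If `G₀` is connected,
`β_t(G₀, U) > 0`, and `L ≥ 1/β_t(G₀, U)`, then for every layer `l` the thickened graph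
satisfies `β_t(G₀^{(L)}, U × {l}) ≥ 1`. -/
theorem thickening_relative_expansion {m n : ℕ} (G : Matrix (Fin m) (Fin n) (ZMod 2))
    (hinc : IsIncidence G) (hconn : (incGraph G).Connected)
    (U : Finset (Fin n)) (t : ℕ) (ht : 0 < t)
    (hpos : 0 < relExp G U t) (L : ℕ) (hL : 1 / relExp G U t ≤ (L : ℝ)) :
    ∀ l : Fin L,
      1 ≤ relExp (thickened G L) (U.image fun i => ((l, i) : Fin L × Fin n)) t := by
  intro l
  set β := relExp G U t with hβ
  have hL1 : 1 ≤ L := l.pos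
  have hβL : 1 ≤ β * L := by
    rw [div_le_iff₀ hpos] at hL
    linarith
  set f : Fin n → Fin L × Fin n := fun i => ((l, i) : Fin L × Fin n) with hf
  have hfinj : Function.Injective f := by
    intro a b hab
    simpa [hf, Prod.ext_iff] using hab
  set U' := U.image f with hU'
  have hcardU' : U'.card = U.card := Finset.card_image_of_injective _ hfinj
  have hU2 : 2 ≤ U.card := two_le_card_of_relExp_pos G U t ht hpos
  set G' := thickened G L with hG'
  -- the key inequality: 1 ∈ expSet G' U' t
  have hmem : (1:ℝ) ∈ expSet G' U' t := by
    intro v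
    rw [one_mul]
    -- layer vectors over ℕ
    set w : ℕ → Fin n → ZMod 2 :=
      fun j i => if h : j < L then v (⟨j, h⟩, i) else 0 with hw
    set hh : ℕ → ℝ := fun j => (hwtOn (w j) U : ℝ) with hhh
    set μ : ℕ → ℝ := fun j => min (t : ℝ) (min (hh j) ((U.card : ℝ) - hh j)) with hμ
    have hμnonneg : ∀ j, 0 ≤ μ j := by
      intro j
      have h1 : (hwtOn (w j) U : ℝ) ≤ (U.card : ℝ) := by exact_mod_cast hwtOn_le_card _ U
      simp only [hμ, le_min_iff, hhh]
      exact ⟨by positivity, by positivity, by linarith⟩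
    -- weight decomposition
    have hdecomp : (hwt (G'.mulVec v) : ℝ)
        = (∑ j ∈ Finset.range L, (hwt (G.mulVec (w j)) : ℝ))
          + ∑ k ∈ Finset.range (L-1), (hwt (w k + w (k+1)) : ℝ) := by
      have e1 : hwt (G'.mulVec v)
          = hwt (fun p : Fin L × Fin m => G'.mulVec v (Sum.inl p))
            + hwt (fun p : Fin (L-1) × Fin n => G'.mulVec v (Sum.inr p)) := by
        have := hwt_sum_split (G'.mulVec v); simpa using this
      have e2 : hwt (fun p : Fin L × Fin m => G'.mulVec v (Sum.inl p))
          = ∑ j ∈ Finset.range L, hwt (G.mulVec (w j)) := by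
        rw [hwt_prod_split, ← Fin.sum_univ_eq_sum_range (fun j => hwt (G.mulVec (w j))) L]
        refine Finset.sum_congr rfl fun j _ => ?_
        congr 1
        funext e
        rw [mv_inl]
        congr 1
        funext i
        simp [hw, j.isLt]
      have e3 : hwt (fun p : Fin (L-1) × Fin n => G'.mulVec v (Sum.inr p))
          = ∑ k ∈ Finset.range (L-1), hwt (w k + w (k+1)) := by
        rw [hwt_prod_split, ← Fin.sum_univ_eq_sum_range (fun k => hwt (w k + w (k+1))) (L-1)]
        refine Finset.sum_congr rfl fun k _ => ?_
        have hk1 : (k : ℕ) < L := by have := k.isLt; omega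
        have hk2 : (k : ℕ) + 1 < L := by have := k.isLt; omega
        congr 1
        funext i
        rw [mv_inr G v k i hk1 hk2]
        simp [hw, hk1, hk2, Pi.add_apply]
      rw [e1, e2, e3]
      push_cast
      ring
    -- per-layer expansion bound
    have hexp : ∀ j, β * μ j ≤ (hwt (G.mulVec (w j)) : ℝ) := fun j => relExp_spec G U t (w j)
    -- Lipschitz / edge bound
    have hlip : ∀ k, |μ (k+1) - μ k| ≤ (hwt (w k + w (k+1)) : ℝ) := by
      intro k
      have h1 : |μ (k+1) - μ k| ≤ |hh (k+1) - hh k| := by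
        calc |μ (k+1) - μ k|
            ≤ max |(t:ℝ) - (t:ℝ)|
              |min (hh (k+1)) ((U.card : ℝ) - hh (k+1)) - min (hh k) ((U.card : ℝ) - hh k)| :=
              abs_min_sub_min_le_max _ _ _ _
        _ ≤ max 0 (max |hh (k+1) - hh k| |((U.card : ℝ) - hh (k+1)) - ((U.card : ℝ) - hh k)|) := by
              apply max_le_max (by simp) (abs_min_sub_min_le_max _ _ _ _)
        _ ≤ |hh (k+1) - hh k| := by
              apply max_le (abs_nonneg _)
              apply max_le le_rfl
              rw [show ((U.card : ℝ) - hh (k+1)) - ((U.card : ℝ) - hh k)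
                  = -(hh (k+1) - hh k) by ring, abs_neg]
      have h2a := hwtOn_add_ge (w k) (w (k+1)) U
      have h2b := hwtOn_add_ge (w (k+1)) (w k) U
      rw [add_comm (w (k+1))] at h2b
      have h3 : |hh (k+1) - hh k| ≤ (hwtOn (w k + w (k+1)) U : ℝ) := by
        rw [abs_sub_le_iff]
        constructor
        · have : (hwtOn (w (k+1)) U : ℤ) - hwtOn (w k) U ≤ hwtOn (w k + w (k+1)) U := h2b
          simp only [hhh]
          exact_mod_cast this
        · simp only [hhh]
          exact_mod_cast h2a
      have h4 : (hwtOn (w k + w (k+1)) U : ℝ) ≤ (hwt (w k + w (k+1)) : ℝ) := by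
        exact_mod_cast hwtOn_le_hwt _ U
      linarith
    -- identify the goal quantity with μ l
    have hgoal : min (t : ℝ) (min (hwtOn v U' : ℝ) ((U'.card : ℝ) - (hwtOn v U' : ℝ)))
        = μ (l : ℕ) := by
      have : hwtOn v U' = hwtOn (w (l : ℕ)) U := by
        rw [hU', hwtOn_image v U f hfinj]
        congr 1
        funext i
        simp [hw, l.isLt, hf]
      rw [this, hcardU']
    rw [hgoal]
    set S : ℝ := ∑ k ∈ Finset.range (L-1), (hwt (w k + w (k+1)) : ℝ) with hS
    have hS0 : 0 ≤ S := Finset.sum_nonneg fun k _ => by positivity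
    have hA0 : 0 ≤ ∑ j ∈ Finset.range L, (hwt (G.mulVec (w j)) : ℝ) :=
      Finset.sum_nonneg fun j _ => by positivity
    rcases le_or_gt (μ (l : ℕ)) S with hcase | hcase
    · rw [hdecomp]; linarith
    · -- every layer has μ j ≥ μ l - S
      have hlayer : ∀ j ∈ Finset.range L, μ (l : ℕ) - S ≤ μ j := by
        intro j hj
        rw [Finset.mem_range] at hj
        have habs : |μ (l : ℕ) - μ j| ≤ S := by
          have key : ∀ a b : ℕ, a ≤ b → b < L →
              |μ b - μ a| ≤ S := by
            intro a b hab hbL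
            calc |μ b - μ a| ≤ ∑ k ∈ Finset.Ico a b, |μ (k+1) - μ k| := tele μ a b hab
            _ ≤ ∑ k ∈ Finset.range (L-1), |μ (k+1) - μ k| := by
                apply Finset.sum_le_sum_of_subset_of_nonneg
                · intro x hx
                  rw [Finset.mem_Ico] at hx
                  rw [Finset.mem_range]
                  omega
                · intro _ _ _; exact abs_nonneg _
            _ ≤ S := Finset.sum_le_sum fun k _ => hlip k
          rcases le_total (l : ℕ) j with h | h
          · rw [abs_sub_comm]; exact key _ _ h hj
          · exact key _ _ h l.isLt
        have := abs_le.mp habs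
        linarith [this.2]
      have hsum : (L : ℝ) * (μ (l : ℕ) - S) ≤ ∑ j ∈ Finset.range L, μ j := by
        calc (L : ℝ) * (μ (l : ℕ) - S)
            = ∑ _j ∈ Finset.range L, (μ (l : ℕ) - S) := by
              rw [Finset.sum_const, Finset.card_range, nsmul_eq_mul]
        _ ≤ _ := Finset.sum_le_sum hlayer
      have hAsum : β * ∑ j ∈ Finset.range L, μ j
          ≤ ∑ j ∈ Finset.range L, (hwt (G.mulVec (w j)) : ℝ) := by
        rw [Finset.mul_sum]
        exact Finset.sum_le_sum fun j _ => hexp j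
      have hfinal : μ (l : ℕ) - S ≤ ∑ j ∈ Finset.range L, (hwt (G.mulVec (w j)) : ℝ) := by
        have h1 : β * ((L : ℝ) * (μ (l : ℕ) - S)) ≤ β * ∑ j ∈ Finset.range L, μ j :=
          mul_le_mul_of_nonneg_left hsum (le_of_lt hpos)
        have h2 : (μ (l : ℕ) - S) * 1 ≤ (μ (l : ℕ) - S) * (β * L) :=
          mul_le_mul_of_nonneg_left hβL (by linarith)
        nlinarith
      rw [hdecomp]
      linarith
  -- bounded above
  have hbdd : BddAbove (expSet G' U' t) := by
    obtain ⟨i₀, hi₀⟩ := Finset.card_pos.mp (by omega : 0 < U.card)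
    set v₀ : Fin L × Fin n → ZMod 2 := fun p => if p = (l, i₀) then 1 else 0 with hv₀
    have hmemU' : (l, i₀) ∈ U' := Finset.mem_image.mpr ⟨i₀, hi₀, rfl⟩
    have hwt1 : hwtOn v₀ U' = 1 := by
      unfold hwtOn
      have : (U'.filter fun p => v₀ p ≠ 0) = {(l, i₀)} := by
        ext p
        simp only [Finset.mem_filter, Finset.mem_singleton, hv₀]
        constructor
        · rintro ⟨_, hp⟩
          by_contra hne
          simp [hne] at hp
        · rintro rfl
          exact ⟨hmemU', by simp⟩
      rw [this, Finset.card_singleton]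
    refine ⟨(hwt (G'.mulVec v₀) : ℝ), fun c hc => ?_⟩
    have := hc v₀
    rw [hwt1, hcardU'] at this
    have hmin : min (t : ℝ) (min (1 : ℝ) ((U.card : ℝ) - 1)) = 1 := by
      have ht1 : (1:ℝ) ≤ (t:ℝ) := by exact_mod_cast ht
      have hU2' : (2:ℝ) ≤ (U.card : ℝ) := by exact_mod_cast hU2
      rw [min_eq_left (by linarith : (1:ℝ) ≤ (U.card : ℝ) - 1),
        min_eq_right (by linarith : (1:ℝ) ≤ (t:ℝ))]
    rw [Nat.cast_one, hmin, mul_one] at this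
    exact this
  exact le_csSup hbdd hmem
end

section
/- Let G be the incidence matrix of the deformed-code auxiliary graph G = (V, E) with injective port function f into V satisfying β_d(G, im f) ≥ 1, where d is the distance of the original stabilizer code. Suppose Λ̄ is a nontrivial logical operator of the original code and v ∈ F₂^{|V|} indicates an arbitrary subset of vertex checks. Then |Λ̄ · H_Z(v ∈ V)| ≥ d, where H_Z(v ∈ V) denotes the product of the selected vertex Z-checks (each vertex check acts as Z on incident edge qubits and possibly on one original-code qubit q with f(q) = v). Weight is counted on original-code qubits plus edge qubits. -/
open Matrix Finset

/-- The relative-expansion property `β_t(G, U) ≥ 1`. -/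
def ExpGE1 {E V : Type*} [Fintype E] [Fintype V] (G : Matrix E V (ZMod 2))
    (U : Finset V) (t : ℕ) : Prop :=
  ∀ v : V → ZMod 2,
    min t (min (hwtOn v U) (U.card - hwtOn v U)) ≤ hwt (G.mulVec v)

/-- Indicator vector of a finset. -/
def indic {n : ℕ} (L : Finset (Fin n)) : Fin n → ZMod 2 :=
  fun q => if q ∈ L then 1 else 0

/-- A Pauli `(px, pz)` is a stabilizer of the code with checks `[H_X | H_Z]`. -/
def IsStab {r n : ℕ} (HX HZ : Matrix (Fin r) (Fin n) (ZMod 2))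
    (px pz : Fin n → ZMod 2) : Prop :=
  ∃ c : Fin r → ZMod 2, px = Matrix.vecMul c HX ∧ pz = Matrix.vecMul c HZ

/-- Weight of a Pauli with `X`-part `px` and `Z`-part `pz`. -/
def pWeight {n : ℕ} (px pz : Fin n → ZMod 2) : ℕ :=
  (Finset.univ.filter fun q => px q ≠ 0 ∨ pz q ≠ 0).card

/-- The `Z`-support that the selected vertex checks `v` add on the original qubits: qubit
`q ∈ L` is flipped iff the vertex `f q` is selected. -/
def portSupport {n : ℕ} {W : Type*} (L : Finset (Fin n))
    (f : {q : Fin n // q ∈ L} ↪ W) (v : W → ZMod 2) : Fin n → ZMod 2 :=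
  fun q => if h : q ∈ L then v (f ⟨q, h⟩) else 0


lemma pWeight_triangle {n : ℕ} (px pz w : Fin n → ZMod 2) :
    pWeight px pz ≤ pWeight px (pz + w) + hwt w := by
  unfold pWeight hwt
  calc (Finset.univ.filter fun q => px q ≠ 0 ∨ pz q ≠ 0).card
      ≤ ((Finset.univ.filter fun q => px q ≠ 0 ∨ (pz + w) q ≠ 0) ∪
         (Finset.univ.filter fun q => w q ≠ 0)).card := by
        apply Finset.card_le_card
        intro q hq
        simp only [Finset.mem_filter, Finset.mem_union, Finset.mem_univ, true_and,
          Pi.add_apply] at *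
        by_cases hw : w q = 0
        · rcases hq with h | h
          · exact Or.inl (Or.inl h)
          · exact Or.inl (Or.inr (by simpa [hw] using h))
        · exact Or.inr hw
    _ ≤ _ := Finset.card_union_le _ _

/-- **deformed code distance.** Suppose the auxiliary graph `G` with
injective port function `f : L → V` satisfies `β_d(G, im f) ≥ 1`, where `d` is the
distance of the original stabilizer code and `Z̄ = Z(L)` is the measured logical.  If
`Λ̄ = (λx, λz)` is a nontrivial logical of the original code (also not equivalent to
`Z̄`), then for every subset `v` of vertex checks, `|Λ̄ · H_Z(v)| ≥ d`, the weight being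
counted on the original-code qubits together with the edge qubits. -/
theorem deformed_code_distance {r n d : ℕ} {W E : Type*} [Fintype W] [Fintype E]
    (HX HZ : Matrix (Fin r) (Fin n) (ZMod 2))
    (hdist : ∀ px pz : Fin n → ZMod 2,
      HX.mulVec pz + HZ.mulVec px = 0 → ¬ IsStab HX HZ px pz → d ≤ pWeight px pz)
    (L : Finset (Fin n))
    (hZlog : HX.mulVec (indic L) = 0)
    (G : Matrix E W (ZMod 2)) (hinc : IsIncidence G)
    (f : {q : Fin n // q ∈ L} ↪ W)
    (hexp : ExpGE1 G (Finset.univ.map f) d)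
    (lx lz : Fin n → ZMod 2)
    (hlog : HX.mulVec lz + HZ.mulVec lx = 0)
    (hnt : ¬ IsStab HX HZ lx lz)
    (hntZ : ¬ IsStab HX HZ lx (lz + indic L))
    (v : W → ZMod 2) :
    d ≤ pWeight lx (lz + portSupport L f v) + hwt (G.mulVec v) := by
  classical
  set P := portSupport L f v with hP
  set s := hwtOn v (Finset.univ.map f) with hs
  have hcard : (Finset.univ.map f).card = L.card := by
    simp [Finset.card_map, Fintype.card_coe]
  have hpos : (Finset.univ.filter fun q : {q : Fin n // q ∈ L} => v (f q) ≠ 0).card = s := by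
    have h2 : ((Finset.univ.map f).filter fun w => v w ≠ 0)
        = (Finset.univ.filter fun q : {q : Fin n // q ∈ L} => v (f q) ≠ 0).map f := by
      ext a
      simp only [Finset.mem_filter, Finset.mem_map, Finset.mem_univ, true_and]
      constructor
      · rintro ⟨⟨b, rfl⟩, hv⟩; exact ⟨b, hv, rfl⟩
      · rintro ⟨b, hv, rfl⟩; exact ⟨⟨b, rfl⟩, hv⟩
    rw [hs, hwtOn, h2, Finset.card_map]
  have hsle : s ≤ L.card := by
    have : s ≤ (Finset.univ.map f).card := by
      rw [hs]; exact Finset.card_le_card (Finset.filter_subset _ _)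
    omega
  have hA : hwt P = s := by
    have h1 : (Finset.univ.filter fun q : Fin n => P q ≠ 0)
        = ((Finset.univ.filter fun q : {q : Fin n // q ∈ L} => v (f q) ≠ 0).map
            (Function.Embedding.subtype _)) := by
      ext a
      simp only [Finset.mem_filter, Finset.mem_univ, true_and, Finset.mem_map,
        Function.Embedding.coe_subtype, hP, portSupport]
      constructor
      · intro h
        by_cases ha : a ∈ L
        · exact ⟨⟨a, ha⟩, by simpa [ha] using h, rfl⟩
        · simp [ha] at h
      · rintro ⟨⟨b, hb⟩, hbv, rfl⟩
        simpa [hb] using hbv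
    rw [hwt, h1, Finset.card_map, hpos]
  have hB : hwt (indic L + P) = L.card - s := by
    have h1 : (Finset.univ.filter fun q : Fin n => (indic L + P) q ≠ 0)
        = ((Finset.univ.filter fun q : {q : Fin n // q ∈ L} => v (f q) = 0).map
            (Function.Embedding.subtype _)) := by
      ext a
      simp only [Finset.mem_filter, Finset.mem_univ, true_and, Finset.mem_map,
        Function.Embedding.coe_subtype, Pi.add_apply, hP, portSupport, indic]
      constructor
      · intro h
        by_cases ha : a ∈ L
        · refine ⟨⟨a, ha⟩, ?_, rfl⟩
          by_contra hv
          have hv1 : v (f ⟨a, ha⟩) = 1 := by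
            rcases (by decide : ∀ x : ZMod 2, x = 0 ∨ x = 1) (v (f ⟨a, ha⟩)) with h0 | h1
            · exact absurd h0 hv
            · exact h1
          exact h (by rw [if_pos ha, dif_pos ha, hv1]; decide)
        · exact absurd (by rw [if_neg ha, dif_neg ha]; decide) h
      · rintro ⟨⟨b, hb⟩, hbv, rfl⟩
        rw [if_pos hb, dif_pos hb, hbv]
        decide
    have h3 : (Finset.univ.filter fun q : {q : Fin n // q ∈ L} => v (f q) = 0).card
        = L.card - s := by
      have htot := Finset.card_filter_add_card_filter_not
        (s := (Finset.univ : Finset {q : Fin n // q ∈ L}))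
        (p := fun q => v (f q) ≠ 0)
      have hu : (Finset.univ : Finset {q : Fin n // q ∈ L}).card = L.card := by
        simp [Fintype.card_coe]
      simp only [not_not] at htot
      omega
    rw [hwt, h1, Finset.card_map, h3]
  have E1 : d ≤ pWeight lx lz := hdist lx lz hlog hnt
  have E2 : pWeight lx lz ≤ pWeight lx (lz + P) + s := by
    have := pWeight_triangle lx lz P
    omega
  have hlog' : HX.mulVec (lz + indic L) + HZ.mulVec lx = 0 := by
    rw [Matrix.mulVec_add, hZlog, add_zero]; exact hlog
  have E3 : d ≤ pWeight lx (lz + indic L) := hdist lx (lz + indic L) hlog' hntZ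
  have E4 : pWeight lx (lz + indic L) ≤ pWeight lx (lz + P) + (L.card - s) := by
    have key : (lz + indic L) + (indic L + P) = lz + P := by
      funext q
      have h4 : ∀ a b c : ZMod 2, (a + b) + (b + c) = a + c := by decide
      exact h4 _ _ _
    have := pWeight_triangle lx (lz + indic L) (indic L + P)
    rw [key, hB] at this
    exact this
  have E5 := hexp v
  rw [hcard, ← hs] at E5
  omega
end
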